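/- arXiv:2512.04544 — 2 statements merged into one kernel-verified Lean document; each statement's English description precedes it below -/
import Mathlib

section
/- Let W = X₁ + ⋯ + Xₙ where X₁,…,Xₙ are Bernoulli random variables with parameters p₁,…,pₙ ∈ (0,1). Let J be a random index, independent of the Xᵢ, with P(J = i) = pᵢ/(p₁+⋯+pₙ). Then the random variable W* = 1 + Σ_{i ≠ J} Xᵢ^J, where Xᵢ^J is distributed as (Xᵢ | X_J = 1), has the W-size-biased distribution, i.e., E[g(W*)] = E[W g(W)]/E[W] for every function g for which both expectations exist. -/
open MeasureTheory ProbabilityTheory Finset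

/-- Let `W = X₁ + ⋯ + Xₙ` with `Xᵢ` Bernoulli(pᵢ), `pᵢ ∈ (0,1)`
(possibly dependent), realized as coordinates of a measure `μ` on `Fin n → Bool`.
Let `J` be an index chosen with probability `pᵢ / (p₁ + ⋯ + pₙ)`, independent of
all else, and let `Xᵢᴶ` be distributed as `(Xᵢ ∣ X_J = 1)`.  Then
`W* = 1 + ∑_{i ≠ J} Xᵢᴶ` has the `W`-size-biased distribution:
`E[g(W*)] = E[W g(W)] / E[W]` for every `g` for which the expectations exist
(here integrability of the relevant functions is assumed). -/
theorem stmt_1 (n : ℕ) (hn : 0 < n) (p : Fin n → ℝ) (hp : ∀ i, p i ∈ Set.Ioo (0 : ℝ) 1)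
    (μ : Measure (Fin n → Bool)) [IsProbabilityMeasure μ]
    (hBer : ∀ i, μ {ω | ω i = true} = ENNReal.ofReal (p i))
    (W : (Fin n → Bool) → ℝ)
    (hW : ∀ ω, W ω = ∑ i, (if ω i then (1 : ℝ) else 0))
    (g : ℝ → ℝ)
    (hint₁ : Integrable (fun ω => W ω * g (W ω)) μ)
    (hint₂ : ∀ i, Integrable (fun ω => g (1 + ∑ j ∈ univ.erase i, (if ω j then (1 : ℝ) else 0)))
      (μ[|{ω | ω i = true}])) :
    (∑ i, (p i / ∑ j, p j) *
        ∫ ω, g (1 + ∑ j ∈ univ.erase i, (if ω j then (1 : ℝ) else 0)) ∂(μ[|{ω | ω i = true}]))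
      = (∫ ω, W ω * g (W ω) ∂μ) / (∫ ω, W ω ∂μ) := by

  classical
  have hS : 0 < ∑ j, p j := Finset.sum_pos (fun j _ => (hp j).1) ⟨⟨0, hn⟩, mem_univ _⟩
  set A : Fin n → Set (Fin n → Bool) := fun i => {ω | ω i = true} with hA
  have hmeasA : ∀ i, MeasurableSet (A i) := fun i => (Set.to_countable _).measurableSet
  -- On A i, the shifted sum equals W
  have hWeq : ∀ i, ∀ ω ∈ A i,
      (1 : ℝ) + ∑ j ∈ univ.erase i, (if ω j then (1 : ℝ) else 0) = W ω := by
    intro i ω hω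
    have : (if ω i then (1 : ℝ) else 0) = 1 := by simp [hA] at hω; simp [hω]
    rw [hW ω, ← Finset.sum_erase_add univ _ (mem_univ i), this, add_comm]
  -- conditional integral rewritten
  have hcond : ∀ i,
      ∫ ω, g (1 + ∑ j ∈ univ.erase i, (if ω j then (1 : ℝ) else 0)) ∂(μ[|A i])
        = (p i)⁻¹ * ∫ ω, (A i).indicator (fun ω => g (W ω)) ω ∂μ := by
    intro i
    rw [ProbabilityTheory.cond, integral_smul_measure, integral_indicator (hmeasA i)]
    have h1 : ((μ (A i))⁻¹).toReal = (p i)⁻¹ := by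
      rw [hBer i, ← ENNReal.ofReal_inv_of_pos (hp i).1,
        ENNReal.toReal_ofReal (le_of_lt (inv_pos.2 (hp i).1))]
    rw [h1, setIntegral_congr_fun (hmeasA i) (fun ω hω => by rw [hWeq i ω hω]), smul_eq_mul]
  -- sum of indicators is W * g(W)
  have hsum : ∀ ω, ∑ i, (A i).indicator (fun ω => g (W ω)) ω = W ω * g (W ω) := by
    intro ω
    have : ∀ i, (A i).indicator (fun ω => g (W ω)) ω
        = (if ω i then (1 : ℝ) else 0) * g (W ω) := by
      intro i
      by_cases h : ω i <;> simp [Set.indicator, hA, h]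
    simp_rw [this, ← Finset.sum_mul, ← hW ω]
  have hintInd : ∀ i, Integrable ((A i).indicator (fun ω => g (W ω))) μ :=
    fun i => Integrable.of_finite
  have hIntSum : ∫ ω, W ω * g (W ω) ∂μ = ∑ i, ∫ ω, (A i).indicator (fun ω => g (W ω)) ω ∂μ := by
    rw [← integral_finset_sum univ (fun i _ => hintInd i)]
    exact integral_congr_ae (Filter.Eventually.of_forall fun ω => (hsum ω).symm)
  -- E[W] = ∑ p i
  have hEW : ∫ ω, W ω ∂μ = ∑ j, p j := by
    have : ∀ i : Fin n, (fun ω : Fin n → Bool => (if ω i then (1 : ℝ) else 0))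
        = (A i).indicator (fun _ => (1 : ℝ)) := by
      intro i; funext ω; by_cases h : ω i <;> simp [Set.indicator, hA, h]
    calc ∫ ω, W ω ∂μ = ∑ i, ∫ ω, (A i).indicator (fun _ => (1 : ℝ)) ω ∂μ := by
          rw [← integral_finset_sum univ (fun i _ => Integrable.of_finite)]
          exact integral_congr_ae (Filter.Eventually.of_forall fun ω => by
            rw [hW ω]; exact Finset.sum_congr rfl fun i _ => congrFun (this i) ω)
      _ = ∑ j, p j := by
          refine Finset.sum_congr rfl fun i _ => ?_
          rw [integral_indicator (hmeasA i)]
          simp [Measure.real, hA, hBer i, ENNReal.toReal_ofReal (le_of_lt (hp i).1)]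
  calc (∑ i, (p i / ∑ j, p j) *
        ∫ ω, g (1 + ∑ j ∈ univ.erase i, (if ω j then (1 : ℝ) else 0)) ∂(μ[|A i]))
      = ∑ i, (∑ j, p j)⁻¹ * ∫ ω, (A i).indicator (fun ω => g (W ω)) ω ∂μ := by
        refine Finset.sum_congr rfl fun i _ => ?_
        rw [hcond i, div_mul_eq_mul_div, ← mul_assoc, mul_inv_cancel₀ (ne_of_gt (hp i).1),
          one_mul, div_eq_inv_mul]
    _ = (∑ j, p j)⁻¹ * ∑ i, ∫ ω, (A i).indicator (fun ω => g (W ω)) ω ∂μ := by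
        rw [Finset.mul_sum]
    _ = (∫ ω, W ω * g (W ω) ∂μ) / (∫ ω, W ω ∂μ) := by
        rw [← hIntSum, hEW, div_eq_inv_mul]
end

section
/- (Harris–FKG inequality on the Boolean cube) Let Ω = {0,1}^n be equipped with a product Bernoulli measure P and the coordinatewise partial order. If A and B are both increasing events (i.e., w ∈ A and w ≤ w' coordinatewise implies w' ∈ A, and similarly for B), then P(A ∩ B) ≥ P(A) P(B). -/
open MeasureTheory ENNReal

open Finset in
/-- Harris–FKG on the Boolean cube: for a product Bernoulli
measure on `{0,1}^n` and increasing events `A, B` (w.r.t. the coordinatewise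
order), `P(A ∩ B) ≥ P(A) · P(B)`. -/
theorem stmt_4 (n : ℕ) (p : Fin n → ℝ≥0∞) (hp : ∀ i, p i ≤ 1)
    (μ : Measure (Fin n → Bool))
    (hμ : μ = Measure.pi (fun i => (PMF.bernoulli (p i).toNNReal
      (by simpa using ENNReal.toNNReal_mono ENNReal.one_ne_top (hp i))).toMeasure))
    (A B : Set (Fin n → Bool)) (hA : MeasurableSet A) (hB : MeasurableSet B)
    (hAinc : ∀ w w' : Fin n → Bool, w ∈ A → (∀ i, w i ≤ w' i) → w' ∈ A)
    (hBinc : ∀ w w' : Fin n → Bool, w ∈ B → (∀ i, w i ≤ w' i) → w' ∈ B) :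
    μ A * μ B ≤ μ (A ∩ B) := by
  classical
  set q : Fin n → NNReal := fun i => (p i).toNNReal with hq
  have hpq : ∀ i, (q i : ℝ≥0∞) = p i := fun i =>
    ENNReal.coe_toNNReal (ne_top_of_le_ne_top one_ne_top (hp i))
  have hq1 : ∀ i, q i ≤ 1 := by
    intro i
    rw [← ENNReal.coe_le_coe, hpq i]; exact hp i
  set Wn : (Fin n → Bool) → NNReal := fun w => ∏ i, bif w i then q i else 1 - q i with hWn
  -- measure of any set is the sum of weights
  have hsingle : ∀ w : Fin n → Bool, μ {w} = (Wn w : ℝ≥0∞) := by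
    intro w
    have : ({w} : Set (Fin n → Bool)) = Set.univ.pi fun i => {w i} := by
      ext v; simp [funext_iff, Set.mem_pi, eq_comm]
    rw [hμ, this, Measure.pi_pi]
    rw [hWn, ENNReal.coe_finset_prod]
    refine Finset.prod_congr rfl fun i _ => ?_
    rw [PMF.toMeasure_apply_singleton _ _ (measurableSet_singleton _)]
    refine (PMF.bernoulli_apply _ _).trans ?_
    cases w i <;> simp [hpq, ENNReal.coe_sub, ENNReal.coe_toNNReal (ne_top_of_le_ne_top one_ne_top (hp i))]
  have key : ∀ S : Set (Fin n → Bool), μ S = ((∑ w ∈ univ.filter (· ∈ S), Wn w : NNReal) : ℝ≥0∞) := by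
    intro S
    have hS : S = ⋃ w ∈ univ.filter (· ∈ S), ({w} : Set (Fin n → Bool)) := by
      ext v; simp
    have hd : (↑(univ.filter (· ∈ S)) : Set (Fin n → Bool)).PairwiseDisjoint
        (fun w => ({w} : Set (Fin n → Bool))) := by
      intro x _ y _ hxy
      simp [Set.disjoint_singleton, hxy]
    have hb := measure_biUnion_finset (μ := μ) hd (fun b _ => measurableSet_singleton b)
    rw [← hS] at hb
    rw [hb, ENNReal.coe_finset_sum]
    exact Finset.sum_congr rfl fun w _ => hsingle w
  -- indicator functions
  set f : (Fin n → Bool) → NNReal := fun w => if w ∈ A then 1 else 0 with hf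
  set g : (Fin n → Bool) → NNReal := fun w => if w ∈ B then 1 else 0 with hg
  have hfmono : Monotone f := by
    intro w w' hww'
    by_cases h : w ∈ A
    · simp [hf, h, hAinc w w' h (fun i => hww' i)]
    · simp [hf, h]
  have hgmono : Monotone g := by
    intro w w' hww'
    by_cases h : w ∈ B
    · simp [hg, h, hBinc w w' h (fun i => hww' i)]
    · simp [hg, h]
  have hlog : ∀ a b : Fin n → Bool, Wn a * Wn b ≤ Wn (a ⊓ b) * Wn (a ⊔ b) := by
    intro a b
    rw [hWn]
    simp only [← Finset.prod_mul_distrib]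
    refine le_of_eq (Finset.prod_congr rfl fun i _ => ?_)
    show (bif a i then q i else 1 - q i) * (bif b i then q i else 1 - q i)
        = (bif a i && b i then q i else 1 - q i) * (bif a i || b i then q i else 1 - q i)
    cases a i <;> cases b i <;> simp [mul_comm]
  have hfkg := fkg f g Wn (fun w => zero_le) (fun w => zero_le) (fun w => zero_le)
    hfmono hgmono hlog
  have htot : ∑ w, Wn w = 1 := by
    have := Finset.prod_univ_sum (fun _ : Fin n => (Finset.univ : Finset Bool))
      (fun i b => bif b then q i else 1 - q i)
    rw [Fintype.piFinset_univ] at this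
    rw [hWn, ← this]
    have : ∀ i : Fin n, (∑ b : Bool, bif b then q i else 1 - q i) = 1 := by
      intro i
      rw [Fintype.sum_bool]
      exact add_tsub_cancel_of_le (hq1 i)
    exact Finset.prod_eq_one fun i _ => this i
  have hsumf : ∑ w, Wn w * f w = ∑ w ∈ univ.filter (· ∈ A), Wn w := by
    rw [Finset.sum_filter]
    exact Finset.sum_congr rfl fun w _ => by by_cases h : w ∈ A <;> simp [hf, h]
  have hsumg : ∑ w, Wn w * g w = ∑ w ∈ univ.filter (· ∈ B), Wn w := by
    rw [Finset.sum_filter]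
    exact Finset.sum_congr rfl fun w _ => by by_cases h : w ∈ B <;> simp [hg, h]
  have hsumfg : ∑ w, Wn w * (f w * g w) = ∑ w ∈ univ.filter (· ∈ A ∩ B), Wn w := by
    rw [Finset.sum_filter]
    refine Finset.sum_congr rfl fun w _ => ?_
    by_cases h1 : w ∈ A <;> by_cases h2 : w ∈ B <;> simp [hf, hg, h1, h2, Set.mem_inter_iff]
  rw [hsumf, hsumg, hsumfg, htot, one_mul] at hfkg
  rw [key A, key B, key (A ∩ B), ← ENNReal.coe_mul, ENNReal.coe_le_coe]
  convert hfkg using 3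
end
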